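/- arXiv:2405.19218 — 2 statements merged into one kernel-verified Lean document; each statement's English description precedes it below -/
import Mathlib

section
/- For positive integers n, m and any integer a, (∑_{k=1}^{n} exp(2πi·k·a/n)) · (∑_{j=1}^{m} exp(2πi·j·a/m)) = gcd(n, m) · ∑_{k=1}^{lcm(n,m)} exp(2πi·k·a/lcm(n,m)). -/
/-!
The sum of the `k`-th powers, `k = 1, …, n`, of the `n`-th root of unity `exp (2πi a / n)` is `n`
when `n ∣ a` and `0` otherwise. Since `lcm n m ∣ a ↔ n ∣ a ∧ m ∣ a` and `gcd n m * lcm n m = n * m`,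
both sides are `n * m` or `0` together.
-/

open Finset Complex Real

theorem sum_Icc_pow_eq_zero_of_pow_eq_one {R : Type*} [CommRing R] [NoZeroDivisors R] {ζ : R}
    {n : ℕ} (hζn : ζ ^ n = 1) (hζ1 : ζ ≠ 1) : ∑ k ∈ Icc 1 n, ζ ^ k = 0 := by
  have hgeom : ∑ k ∈ range n, ζ ^ k = 0 :=
    (mul_eq_zero.mp (by rw [mul_neg_geom_sum, hζn, sub_self])).resolve_left
      (sub_ne_zero.mpr hζ1.symm)
  rw [← Finset.Ico_add_one_right_eq_Icc, sum_Ico_eq_sum_range]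
  simp [pow_succ', add_comm, ← mul_sum, hgeom]

theorem sum_Icc_exp_two_pi_I_mul_div (n : ℕ) (hn : n ≠ 0) (a : ℤ) :
    ∑ k ∈ Icc 1 n, exp (2 * π * I * k * a / n) = if (n : ℤ) ∣ a then (n : ℂ) else 0 := by
  have hω := isPrimitiveRoot_exp n hn
  have hterm (k : ℕ) : exp (2 * π * I * k * a / n) = (exp (2 * π * I / n) ^ a) ^ k := by
    rw [← Complex.exp_int_mul, ← Complex.exp_nat_mul]
    ring_nf
  simp_rw [hterm]
  split_ifs with hdvd
  · simp [(hω.zpow_eq_one_iff_dvd a).mpr hdvd]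
  · refine sum_Icc_pow_eq_zero_of_pow_eq_one ?_ (mt (hω.zpow_eq_one_iff_dvd a).mp hdvd)
    rw [← zpow_natCast, ← zpow_mul, mul_comm a, zpow_mul, zpow_natCast, hω.pow_eq_one, one_zpow]

theorem ite_dvd_mul_ite_dvd (n m : ℕ) (a : ℤ) :
    ((if (n : ℤ) ∣ a then (n : ℂ) else 0) * if (m : ℤ) ∣ a then (m : ℂ) else 0) =
      (n.gcd m : ℂ) * if (n.lcm m : ℤ) ∣ a then (n.lcm m : ℂ) else 0 := by
  have hlcm : ((n.lcm m : ℕ) : ℤ) ∣ a ↔ (n : ℤ) ∣ a ∧ (m : ℤ) ∣ a := by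
    simpa using Int.coe_lcm_dvd_iff (a := n) (b := m) (c := a)
  by_cases hn : (n : ℤ) ∣ a <;> by_cases hm : (m : ℤ) ∣ a <;> simp [hn, hm, hlcm]
  exact_mod_cast (Nat.gcd_mul_lcm n m).symm

theorem stmt_14 (n m : ℕ) (hn : 0 < n) (hm : 0 < m) (a : ℤ) :
    (∑ k ∈ Finset.Icc 1 n,
        Complex.exp (2 * Real.pi * Complex.I * (k : ℂ) * (a : ℂ) / (n : ℂ))) *
      (∑ j ∈ Finset.Icc 1 m,
        Complex.exp (2 * Real.pi * Complex.I * (j : ℂ) * (a : ℂ) / (m : ℂ))) =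
      (Nat.gcd n m : ℂ) *
        ∑ k ∈ Finset.Icc 1 (Nat.lcm n m),
          Complex.exp (2 * Real.pi * Complex.I * (k : ℂ) * (a : ℂ) / (Nat.lcm n m : ℂ)) := by
  rw [sum_Icc_exp_two_pi_I_mul_div n hn.ne' a, sum_Icc_exp_two_pi_I_mul_div m hm.ne' a,
    sum_Icc_exp_two_pi_I_mul_div _ (Nat.lcm_ne_zero hn.ne' hm.ne') a, ite_dvd_mul_ite_dvd]
end

section
/- Let r > 0 be a real number. Then there exists a sequence of fractions p_i/n_i with p_i and n_i positive integers, gcd(p_i, n_j) = 1 for all i, j, such that the partial products ∏_{i=1}^{k} p_i/n_i converge to r as k → ∞. -/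
/-!
The fractions `p / 2 ^ a` with `p` odd are dense in `(0, ∞)`, and odd numbers are coprime to
every power of two. Given any set `G` of positive reals dense in `(0, ∞)`, one builds the product
greedily: if the current partial product is `x > 0`, the next factor is an element of `G` close
enough to `r / x` that the new product is within `1 / (k + 1)` of `r`.
-/

open Filter Topology

noncomputable def greedyProd (f : ℕ → ℝ → ℝ) : ℕ → ℝ
  | 0 => 1
  | k + 1 => greedyProd f k * f k (greedyProd f k)

theorem prod_range_greedyProd (f : ℕ → ℝ → ℝ) (k : ℕ) :
    ∏ i ∈ Finset.range k, f i (greedyProd f i) = greedyProd f k := by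
  induction k with
  | zero => rfl
  | succ k ih => rw [Finset.prod_range_succ, ih, greedyProd]

theorem exists_mem_abs_mul_sub_lt {G : Set ℝ} (hG : Set.Ioi 0 ⊆ closure G) {x r δ : ℝ}
    (hx : 0 < x) (hr : 0 < r) (hδ : 0 < δ) : ∃ g ∈ G, |x * g - r| < δ := by
  obtain ⟨g, hg, hdist⟩ :=
    Metric.mem_closure_iff.mp (hG (div_pos hr hx : 0 < r / x)) (δ / x) (div_pos hδ hx)
  refine ⟨g, hg, ?_⟩
  calc |x * g - r| = x * |r / x - g| := by
        rw [← abs_of_pos hx, ← abs_mul, abs_of_pos hx, abs_sub_comm, mul_sub,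
          mul_div_cancel₀ _ hx.ne']
    _ < x * (δ / x) := mul_lt_mul_of_pos_left hdist hx
    _ = δ := mul_div_cancel₀ _ hx.ne'

theorem exists_tendsto_prod_of_subset_closure {G : Set ℝ} (hGpos : G ⊆ Set.Ioi 0)
    (hG : Set.Ioi 0 ⊆ closure G) {r : ℝ} (hr : 0 < r) :
    ∃ g : ℕ → ℝ, (∀ i, g i ∈ G) ∧ Tendsto (fun k => ∏ i ∈ Finset.range k, g i) atTop (𝓝 r) := by
  have hstep : ∀ (k : ℕ) (x : ℝ), ∃ g ∈ G, 0 < x → |x * g - r| < 1 / (k + 1) := by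
    intro k x
    by_cases hx : 0 < x
    · obtain ⟨g, hg, hclose⟩ := exists_mem_abs_mul_sub_lt hG hx hr Nat.one_div_pos_of_nat
      exact ⟨g, hg, fun _ => hclose⟩
    · obtain ⟨g, hg, -⟩ := exists_mem_abs_mul_sub_lt hG one_pos hr one_pos
      exact ⟨g, hg, fun h => absurd h hx⟩
  choose f hfG hf using hstep
  have hpos : ∀ k, 0 < greedyProd f k := by
    intro k
    induction k with
    | zero => exact one_pos
    | succ k ih => exact mul_pos ih (hGpos (hfG k _))
  refine ⟨fun i => f i (greedyProd f i), fun i => hfG i _, ?_⟩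
  simp_rw [prod_range_greedyProd]
  rw [← tendsto_add_atTop_iff_nat 1, tendsto_iff_norm_sub_tendsto_zero]
  refine squeeze_zero (fun _ => norm_nonneg _) (fun k => ?_) tendsto_one_div_add_atTop_nhds_zero_nat
  exact (hf k _ (hpos k)).le

theorem exists_odd_abs_sub_le_one {x : ℝ} (hx : 0 ≤ x) : ∃ p : ℕ, Odd p ∧ |(p : ℝ) - x| ≤ 1 := by
  refine ⟨2 * ⌊x / 2⌋₊ + 1, odd_two_mul_add_one _, abs_le.mpr ⟨?_, ?_⟩⟩ <;> push_cast
  · linarith [Nat.sub_one_lt_floor (x / 2)]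
  · linarith [Nat.floor_le (div_nonneg hx zero_le_two)]

theorem Ioi_subset_closure_odd_div_two_pow :
    Set.Ioi 0 ⊆ closure {q : ℝ | ∃ p a : ℕ, Odd p ∧ q = p / 2 ^ a} := by
  intro y hy
  rw [Metric.mem_closure_iff]
  intro ε hε
  obtain ⟨a, ha⟩ := exists_pow_lt_of_lt_one hε (one_half_lt_one : (1 / 2 : ℝ) < 1)
  have h2a : (0 : ℝ) < 2 ^ a := by positivity
  obtain ⟨p, hp, hclose⟩ := exists_odd_abs_sub_le_one (mul_nonneg (le_of_lt hy) h2a.le)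
  refine ⟨p / 2 ^ a, ⟨p, a, hp, rfl⟩, ?_⟩
  calc dist y (p / 2 ^ a) = |(p : ℝ) - y * 2 ^ a| / 2 ^ a := by
        rw [Real.dist_eq, abs_sub_comm, ← abs_of_pos h2a, ← abs_div, abs_of_pos h2a, sub_div,
          mul_div_cancel_right₀ _ h2a.ne']
    _ ≤ 1 / 2 ^ a := div_le_div_of_nonneg_right hclose h2a.le
    _ < ε := by rwa [one_div_pow] at ha

theorem stmt_17 (r : ℝ) (hr : 0 < r) :
    ∃ p n : ℕ → ℕ,
      (∀ i, 0 < p i) ∧ (∀ i, 0 < n i) ∧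
      (∀ i j, Nat.gcd (p i) (n j) = 1) ∧
      Tendsto (fun k => ∏ i ∈ Finset.range k, (p i : ℝ) / (n i : ℝ)) atTop (𝓝 r) := by
  have hpos : {q : ℝ | ∃ p a : ℕ, Odd p ∧ q = p / 2 ^ a} ⊆ Set.Ioi 0 := by
    rintro _ ⟨p, a, hp, rfl⟩
    have := hp.pos
    exact (by positivity : (0 : ℝ) < p / 2 ^ a)
  obtain ⟨g, hgG, hlim⟩ :=
    exists_tendsto_prod_of_subset_closure hpos Ioi_subset_closure_odd_div_two_pow hr
  choose p a hodd hg using hgG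
  refine ⟨p, fun i => 2 ^ a i, fun i => (hodd i).pos, fun i => by positivity,
    fun i j => (Nat.coprime_two_right.mpr (hodd i)).pow_right (a j), ?_⟩
  simpa only [hg, Nat.cast_pow, Nat.cast_ofNat] using hlim
end
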